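/- arXiv:1301.6236 — 2 statements merged into one kernel-verified Lean document; each statement's English description precedes it below -/
import Mathlib

section
/- In the determinant expansion of a square matrix V over F_q[X] in weak Popov form, the term corresponding to the permutation σ with σ(i) = LP(v_i) for all rows i has degree strictly greater than the degree of the term of any other permutation; consequently deg det V = Σ_i deg LT(v_i). -/
/-! Every factor `V i (π i)` has degree at most `deg v_i`, and attains it only if
`π i ≤ LP(v_i) = σ i`. A permutation of `Fin m` dominated pointwise by `σ` is `σ`, so the
term of any `π ≠ σ` loses degree in some factor, and the `σ`-term strictly dominates the
Leibniz expansion of `det V`. -/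

open Polynomial

open scoped Classical

/-- The degree of a vector over `F[X]`: the maximum of the degrees of its entries
(`⊥` for the zero vector). -/
noncomputable def vecDeg {F : Type*} [Field F] {m : ℕ} (v : Fin m → Polynomial F) : WithBot ℕ :=
  Finset.univ.sup fun j => (v j).degree

/-- The leading position of a vector over `F[X]`: the largest index attaining the
vector's degree. -/
noncomputable def leadPos {F : Type*} [Field F] {m : ℕ} (v : Fin m → Polynomial F) : ℕ :=
  (Finset.univ.filter fun j : Fin m => (v j).degree = vecDeg v).sup fun j => (j : ℕ)

/-- A square matrix over `F[X]` is in weak Popov form if the leading positions of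
its rows are pairwise distinct. -/
noncomputable def WeakPopov {F : Type*} [Field F] {m : ℕ}
    (V : Matrix (Fin m) (Fin m) (Polynomial F)) : Prop :=
  Function.Injective fun i => leadPos (V i)

/-- The degree of a matrix over `F[X]`: the sum of its row degrees (in `WithBot ℕ`). -/
noncomputable def matDeg {F : Type*} [Field F] {m : ℕ}
    (V : Matrix (Fin m) (Fin m) (Polynomial F)) : WithBot ℕ :=
  ∑ i, vecDeg (V i)

/-- The degree of a vector over `F[X]`, as a natural number (via `natDegree`). -/
def vecDegNat {F : Type*} [Field F] {m : ℕ} (v : Fin m → Polynomial F) : ℕ :=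
  Finset.univ.sup fun j => (v j).natDegree

/-- The degree of a matrix over `F[X]` as a natural number: the sum of its row degrees. -/
def matDegNat {F : Type*} [Field F] {m : ℕ}
    (V : Matrix (Fin m) (Fin m) (Polynomial F)) : ℕ :=
  ∑ i, vecDegNat (V i)

/-- The diagonal weight matrix W_ℓ = diag(1, X^{k−1}, …, X^{ℓ(k−1)}). -/
noncomputable def Wmat (F : Type*) [Field F] (k ℓ : ℕ) :
    Matrix (Fin (ℓ + 1)) (Fin (ℓ + 1)) (Polynomial F) :=
  Matrix.diagonal fun i => X ^ ((i : ℕ) * (k - 1))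

section LeadingPosition

variable {F : Type*} [Field F] {m : ℕ} {v : Fin m → F[X]} {j : Fin m}

theorem degree_le_vecDeg (v : Fin m → F[X]) (j : Fin m) : (v j).degree ≤ vecDeg v :=
  Finset.le_sup (f := fun j => (v j).degree) (Finset.mem_univ j)

theorem le_leadPos (hj : (v j).degree = vecDeg v) : (j : ℕ) ≤ leadPos v :=
  Finset.le_sup (f := fun j : Fin m => (j : ℕ)) (Finset.mem_filter.mpr ⟨Finset.mem_univ j, hj⟩)

theorem degree_eq_vecDeg_of_val_eq_leadPos (hj : (j : ℕ) = leadPos v) :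
    (v j).degree = vecDeg v := by
  obtain ⟨k, -, hk⟩ := Finset.exists_mem_eq_sup Finset.univ ⟨j, Finset.mem_univ j⟩
    fun k => (v k).degree
  obtain ⟨l, hl, hlj⟩ := Finset.exists_mem_eq_sup
    (Finset.univ.filter fun k : Fin m => (v k).degree = vecDeg v)
    ⟨k, Finset.mem_filter.mpr ⟨Finset.mem_univ k, hk.symm⟩⟩ fun k : Fin m => (k : ℕ)
  have hjl : j = l := Fin.ext (hj.trans hlj)
  exact hjl ▸ (Finset.mem_filter.mp hl).2

theorem ne_zero_of_val_eq_leadPos (hv : v ≠ 0) (hj : (j : ℕ) = leadPos v) : v j ≠ 0 := by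
  obtain ⟨k, hk⟩ := Function.ne_iff.mp hv
  intro h
  have := degree_le_vecDeg v k
  rw [← degree_eq_vecDeg_of_val_eq_leadPos hj, h, degree_zero, le_bot_iff, degree_eq_bot] at this
  exact hk this

end LeadingPosition

theorem Equiv.Perm.eq_of_forall_apply_le {m : ℕ} {π σ : Equiv.Perm (Fin m)}
    (h : ∀ i, π i ≤ σ i) : π = σ := by
  have hsum : ∑ i, (π i : ℕ) = ∑ i, (σ i : ℕ) := by
    rw [Equiv.sum_comp π (fun j : Fin m => (j : ℕ)), Equiv.sum_comp σ (fun j : Fin m => (j : ℕ))]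
  ext i
  exact (Finset.sum_eq_sum_iff_of_le fun i _ => Fin.le_def.mp (h i)).mp hsum i (Finset.mem_univ i)

namespace Polynomial

variable {R ι : Type*} [CommRing R]

theorem degree_prod_lt_degree_prod [IsDomain R] [Fintype ι] {f g : ι → R[X]}
    (hg : ∀ i, g i ≠ 0) (hle : ∀ i, (f i).degree ≤ (g i).degree)
    (hlt : ∃ i, (f i).degree < (g i).degree) : (∏ i, f i).degree < (∏ i, g i).degree := by
  have hg' : ∏ i, g i ≠ 0 := Finset.prod_ne_zero_iff.mpr fun i _ => hg i
  rcases em (∃ i, f i = 0) with ⟨i, hi⟩ | hf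
  · rw [Finset.prod_eq_zero (Finset.mem_univ i) hi, degree_zero, bot_lt_iff_ne_bot, ne_eq,
      degree_eq_bot]
    exact hg'
  simp only [not_exists] at hf
  have hf' : ∏ i, f i ≠ 0 := Finset.prod_ne_zero_iff.mpr fun i _ => hf i
  rw [degree_eq_natDegree hf', degree_eq_natDegree hg', natDegree_prod _ _ fun i _ => hf i,
    natDegree_prod _ _ fun i _ => hg i, Nat.cast_lt]
  obtain ⟨i, hi⟩ := hlt
  exact Finset.sum_lt_sum (fun i _ => natDegree_le_natDegree (hle i))
    ⟨i, Finset.mem_univ i, natDegree_lt_natDegree (hf i) hi⟩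

theorem degree_sum_eq_of_degree_lt {s : Finset ι} {f : ι → R[X]} {a : ι} (ha : a ∈ s)
    (h : ∀ b ∈ s, b ≠ a → (f b).degree < (f a).degree) :
    (∑ b ∈ s, f b).degree = (f a).degree := by
  have h' : ∀ b ∈ s.erase a, (f b).degree < (f a).degree := fun b hb =>
    h b (Finset.mem_of_mem_erase hb) (Finset.ne_of_mem_erase hb)
  rw [← Finset.sum_erase_add _ _ ha]
  rcases (s.erase a).eq_empty_or_nonempty with he | ⟨b, hb⟩
  · rw [he, Finset.sum_empty, zero_add]
  · exact degree_add_eq_right_of_degree_lt <|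
      (degree_sum_le _ _).trans_lt <| (Finset.sup_lt_iff (bot_lt_of_lt (h' b hb))).mpr h'

end Polynomial

theorem Matrix.degree_det_eq_degree_prod_of_degree_prod_lt {R n : Type*} [CommRing R]
    [Fintype n] [DecidableEq n] {V : Matrix n n R[X]} {σ : Equiv.Perm n}
    (h : ∀ π, π ≠ σ → (∏ i, V i (π i)).degree < (∏ i, V i (σ i)).degree) :
    V.det.degree = (∏ i, V i (σ i)).degree := by
  have degree_sign_smul (π : Equiv.Perm n) (p : R[X]) :
      (Equiv.Perm.sign π • p).degree = p.degree := by
    rcases Int.units_eq_one_or (Equiv.Perm.sign π) with hs | hs <;> simp [hs, Units.smul_def]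
  rw [← det_transpose, det_apply]
  simp only [transpose_apply]
  rw [Polynomial.degree_sum_eq_of_degree_lt (Finset.mem_univ σ), degree_sign_smul]
  intro π _ hπ
  simpa only [degree_sign_smul] using h π hπ

theorem statement7_general {F : Type*} [Field F] {m : ℕ}
    (V : Matrix (Fin m) (Fin m) (Polynomial F))
    (hrows : ∀ i, V i ≠ 0)
    (σ : Equiv.Perm (Fin m)) (hσ : ∀ i, (σ i : ℕ) = leadPos (V i)) :
    (∀ π : Equiv.Perm (Fin m), π ≠ σ →
        (∏ i, V i (π i)).degree < (∏ i, V i (σ i)).degree) ∧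
      V.det.degree = ∑ i, (V i (σ i)).degree := by
  have hlead i : (V i (σ i)).degree = vecDeg (V i) := degree_eq_vecDeg_of_val_eq_leadPos (hσ i)
  have hdominant : ∀ π : Equiv.Perm (Fin m), π ≠ σ →
      (∏ i, V i (π i)).degree < (∏ i, V i (σ i)).degree := by
    intro π hπ
    refine degree_prod_lt_degree_prod (fun i => ne_zero_of_val_eq_leadPos (hrows i) (hσ i))
      (fun i => hlead i ▸ degree_le_vecDeg _ _) ?_
    by_contra! hnot
    exact hπ <| Equiv.Perm.eq_of_forall_apply_le fun i => Fin.le_def.mpr <|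
      (le_leadPos ((degree_le_vecDeg _ _).antisymm (hlead i ▸ hnot i))).trans (hσ i).ge
  refine ⟨hdominant, ?_⟩
  rw [Matrix.degree_det_eq_degree_prod_of_degree_prod_lt hdominant, degree_prod]

/-- For a square matrix V in weak Popov form (nonzero rows), the
determinant term of the permutation σ with σ(i) = LP(v_i) has degree strictly greater
than the term of any other permutation; consequently deg det V = Σ_i deg LT(v_i). -/
theorem statement7 {F : Type*} [Field F] [Fintype F] {m : ℕ}
    (V : Matrix (Fin m) (Fin m) (Polynomial F))
    (hrows : ∀ i, V i ≠ 0) (hV : WeakPopov V)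
    (σ : Equiv.Perm (Fin m)) (hσ : ∀ i, (σ i : ℕ) = leadPos (V i)) :
    (∀ π : Equiv.Perm (Fin m), π ≠ σ →
        (∏ i, V i (π i)).degree < (∏ i, V i (σ i)).degree) ∧
      V.det.degree = ∑ i, (V i (σ i)).degree :=
  statement7_general V hrows σ hσ
end

section
/- If B^(0)(X,Y), …, B^(ℓ)(X,Y) is a basis of M_{s,ℓ} as an F_q[X]-module, then G(X)^{s+1}, B^(0)·(Y−R(X)), …, B^(ℓ)·(Y−R(X)) is a basis of M_{s+1,ℓ+1}. -/
/-!
Division by the monic polynomial `Y - R(X)` writes every `Q ∈ M_{s+1,ℓ+1}` as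
`Q(X, R(X)) + Q₁ · (Y - R(X))`. Vanishing to order `s + 1` at `(αᵢ, R(αᵢ))` makes
`(X - αᵢ)^{s+1}` divide `Q(X, R(X))`, so by coprimality `G^{s+1}` divides it. After the shift
to `(αᵢ, r'ᵢ)`, the factor `Y - R` becomes `Y - u` with `u(0) = 0`, and comparing coefficients
of `X^i Y^j` by induction on `i` shows that `Q₁ · (Y - u)` vanishing to order `s + 1` forces `Q₁`
to vanish to order `s`; hence `Q₁ ∈ M_{s,ℓ}`. Linear independence follows by substituting
`Y = R(X)`, which kills every term but the `G^{s+1}` one, and cancelling the factor `Y - R`.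
-/

open Polynomial

/-- The shifted polynomial Q(X+a, Y+b), where `Q : F[X][Y]` (outer variable `Y`,
inner variable `X`). -/
noncomputable def shiftXY {F : Type*} [Field F] (Q : Polynomial (Polynomial F)) (a b : F) :
    Polynomial (Polynomial F) :=
  (Q.map ((aeval (X + C a : Polynomial F)).toRingHom : Polynomial F →+* Polynomial F)).comp
    (X + C (C b))

/-- `Q` vanishes with multiplicity at least `s` at the point `(a, b)`:
`Q(X+a, Y+b)` has no monomial `X^i Y^j` with `i + j < s`. -/
def HasMultAt {F : Type*} [Field F] (Q : Polynomial (Polynomial F)) (a b : F) (s : ℕ) : Prop :=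
  ∀ i j : ℕ, i + j < s → ((shiftXY Q a b).coeff j).coeff i = 0

/-- The set (an `F[X]`-module) of bivariate polynomials of `Y`-degree at most `ℓ`
vanishing with multiplicity at least `s` at each point `(α i, r' i)`. -/
def InterpSet {F : Type*} [Field F] {n : ℕ} (α r' : Fin n → F) (s ℓ : ℕ) :
    Set (Polynomial (Polynomial F)) :=
  {Q | Q.natDegree ≤ ℓ ∧ ∀ i, HasMultAt Q (α i) (r' i) s}

/-- The family `b` is a basis of the `F[X]`-module `M_{s,ℓ} = InterpSet α r' s ℓ`:
it is linearly independent over `F[X]` and its `F[X]`-span is exactly `M_{s,ℓ}`. -/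
def IsBasisOfInterp {F : Type*} [Field F] {n : ℕ} (α r' : Fin n → F) (s ℓ : ℕ)
    {ι : Type*} (b : ι → Polynomial (Polynomial F)) : Prop :=
  LinearIndependent (Polynomial F) b ∧
    (Submodule.span (Polynomial F) (Set.range b) : Set (Polynomial (Polynomial F))) =
      InterpSet α r' s ℓ

section Multiplicity

variable {F : Type*} [Field F]

noncomputable def shiftXYHom (a b : F) : F[X][X] →+* F[X][X] :=
  (eval₂RingHom C (X + C (C b))).comp (mapRingHom (aeval (X + C a)).toRingHom)

theorem shiftXY_eq_shiftXYHom (Q : F[X][X]) (a b : F) : shiftXY Q a b = shiftXYHom a b Q := rfl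

theorem shiftXY_C (p : F[X]) (a b : F) : shiftXY (C p) a b = C (p.comp (X + C a)) := by
  simp [shiftXY, ← comp_eq_aeval]

theorem shiftXY_X_sub_C (R : F[X]) (a b : F) :
    shiftXY (X - C R) a b = X - C (R.comp (X + C a) - C b) := by
  rw [shiftXY_eq_shiftXYHom, map_sub, ← shiftXY_eq_shiftXYHom, ← shiftXY_eq_shiftXYHom,
    shiftXY_C, shiftXY]
  simp only [Polynomial.map_X, X_comp, map_sub]
  ring

theorem eval_shiftXY (Q : F[X][X]) (R : F[X]) (a b : F) :
    (shiftXY Q a b).eval (R.comp (X + C a) - C b) = (Q.eval R).comp (X + C a) := by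
  have hhom : (aeval (X + C a)).toRingHom.comp (evalRingHom R) =
      (evalRingHom (R.comp (X + C a) - C b)).comp (shiftXYHom a b) := by
    refine Polynomial.ringHom_ext (fun p => ?_) ?_
    · simp [← shiftXY_eq_shiftXYHom, shiftXY_C, ← comp_eq_aeval]
    · simp [← shiftXY_eq_shiftXYHom, shiftXY, ← comp_eq_aeval]
  simpa [← comp_eq_aeval, shiftXY_eq_shiftXYHom] using congrArg (· Q) hhom.symm

theorem coeff_zero_comp_X_add_C_sub_C {R : F[X]} {a b : F} (hR : R.eval a = b) :
    (R.comp (X + C a) - C b).coeff 0 = 0 := by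
  simp [coeff_zero_eq_eval_zero, eval_comp, hR]

def HasMultAtOrigin (A : F[X][X]) (s : ℕ) : Prop :=
  ∀ i j : ℕ, i + j < s → (A.coeff j).coeff i = 0

theorem hasMultAt_iff_hasMultAtOrigin {Q : F[X][X]} {a b : F} {s : ℕ} :
    HasMultAt Q a b s ↔ HasMultAtOrigin (shiftXY Q a b) s := Iff.rfl

namespace HasMultAtOrigin

variable {A B : F[X][X]} {s t : ℕ}

theorem add (hA : HasMultAtOrigin A s) (hB : HasMultAtOrigin B s) :
    HasMultAtOrigin (A + B) s := fun i j h => by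
  rw [coeff_add, coeff_add, hA i j h, hB i j h, add_zero]

theorem sub (hA : HasMultAtOrigin A s) (hB : HasMultAtOrigin B s) :
    HasMultAtOrigin (A - B) s := fun i j h => by
  rw [coeff_sub, coeff_sub, hA i j h, hB i j h, sub_zero]

theorem mul (hA : HasMultAtOrigin A s) (hB : HasMultAtOrigin B t) :
    HasMultAtOrigin (A * B) (s + t) := by
  intro i j hij
  rw [coeff_mul, finsetSum_coeff]
  refine Finset.sum_eq_zero fun ⟨j₁, j₂⟩ hj => ?_
  rw [coeff_mul]
  refine Finset.sum_eq_zero fun ⟨i₁, i₂⟩ hi => ?_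
  rw [Finset.HasAntidiagonal.mem_antidiagonal] at hi hj
  rcases lt_or_ge (i₁ + j₁) s with h | h
  · rw [hA i₁ j₁ h, zero_mul]
  · rw [hB i₂ j₂ (by omega), mul_zero]

theorem of_mul_X_sub_C {u : F[X]} (hu : u.coeff 0 = 0)
    (h : HasMultAtOrigin (A * (X - C u)) (s + 1)) : HasMultAtOrigin A s := by
  intro i
  induction i using Nat.strong_induction_on with
  | _ i ih =>
    intro j hij
    have hcoeff : A.coeff j = (A * (X - C u)).coeff (j + 1) + A.coeff (j + 1) * u := by
      rw [mul_sub, coeff_sub, coeff_mul_X, coeff_mul_C]; ring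
    rw [hcoeff, coeff_add, h i (j + 1) (by omega), zero_add, coeff_mul]
    refine Finset.sum_eq_zero fun ⟨k, m⟩ hkm => ?_
    rw [Finset.HasAntidiagonal.mem_antidiagonal] at hkm
    rcases Nat.eq_zero_or_pos m with rfl | hm
    · rw [hu, mul_zero]
    · rw [ih k (by omega) (j + 1) (by omega), zero_mul]

theorem X_pow_dvd_eval (hA : HasMultAtOrigin A s) {u : F[X]} (hu : X ∣ u) :
    X ^ s ∣ A.eval u := by
  rw [eval_eq_sum_range]
  refine Finset.dvd_sum fun j _ => ?_
  rcases le_or_gt s j with h | h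
  · exact dvd_mul_of_dvd_right ((pow_dvd_pow X h).trans (pow_dvd_pow_of_dvd hu j)) _
  · have hcoeff : X ^ (s - j) ∣ A.coeff j := X_pow_dvd_iff.mpr fun i hi => hA i j (by omega)
    simpa [← pow_add, Nat.sub_add_cancel h.le] using mul_dvd_mul hcoeff (pow_dvd_pow_of_dvd hu j)

end HasMultAtOrigin

theorem hasMultAtOrigin_C {p : F[X]} {s : ℕ} (h : X ^ s ∣ p) : HasMultAtOrigin (C p) s := by
  intro i j hij
  rw [coeff_C]
  split_ifs with hj
  · exact X_pow_dvd_iff.mp h i (by omega)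
  · exact coeff_zero i

namespace HasMultAt

variable {P Q : F[X][X]} {a b : F} {s t : ℕ}

theorem add (hP : HasMultAt P a b s) (hQ : HasMultAt Q a b s) : HasMultAt (P + Q) a b s := by
  rw [hasMultAt_iff_hasMultAtOrigin, shiftXY_eq_shiftXYHom, map_add]
  exact HasMultAtOrigin.add hP hQ

theorem sub (hP : HasMultAt P a b s) (hQ : HasMultAt Q a b s) : HasMultAt (P - Q) a b s := by
  rw [hasMultAt_iff_hasMultAtOrigin, shiftXY_eq_shiftXYHom, map_sub]
  exact HasMultAtOrigin.sub hP hQ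

theorem mul (hP : HasMultAt P a b s) (hQ : HasMultAt Q a b t) :
    HasMultAt (P * Q) a b (s + t) := by
  rw [hasMultAt_iff_hasMultAtOrigin, shiftXY_eq_shiftXYHom, map_mul]
  exact HasMultAtOrigin.mul hP hQ

theorem pow_dvd_eval (h : HasMultAt Q a b s) {R : F[X]} (hR : R.eval a = b) :
    (X - C a) ^ s ∣ Q.eval R := by
  rw [X_sub_C_pow_dvd_iff, ← eval_shiftXY Q R a b]
  exact HasMultAtOrigin.X_pow_dvd_eval h (X_dvd_iff.mpr (coeff_zero_comp_X_add_C_sub_C hR))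

theorem of_mul_X_sub_C {R : F[X]} (hR : R.eval a = b)
    (h : HasMultAt (Q * (X - C R)) a b (s + 1)) : HasMultAt Q a b s := by
  rw [hasMultAt_iff_hasMultAtOrigin, shiftXY_eq_shiftXYHom, map_mul, ← shiftXY_eq_shiftXYHom,
    ← shiftXY_eq_shiftXYHom, shiftXY_X_sub_C] at h
  exact h.of_mul_X_sub_C (coeff_zero_comp_X_add_C_sub_C hR)

end HasMultAt

theorem hasMultAt_C {p : F[X]} {a b : F} {s : ℕ} (h : (X - C a) ^ s ∣ p) :
    HasMultAt (C p) a b s := by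
  rw [hasMultAt_iff_hasMultAtOrigin, shiftXY_C]
  exact hasMultAtOrigin_C (X_sub_C_pow_dvd_iff.mp h)

theorem hasMultAt_X_sub_C {R : F[X]} {a b : F} (hR : R.eval a = b) :
    HasMultAt (X - C R) a b 1 := by
  intro i j hij
  obtain ⟨rfl, rfl⟩ : i = 0 ∧ j = 0 := by omega
  rw [shiftXY_X_sub_C, coeff_sub, coeff_X_zero, coeff_C_zero, zero_sub, coeff_neg,
    coeff_zero_comp_X_add_C_sub_C hR, neg_zero]

end Multiplicity

theorem divByMonic_X_sub_C_mul {A : Type*} [CommRing A] (p : A[X]) (r : A) :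
    p /ₘ (X - C r) * (X - C r) = p - C (p.eval r) := by
  rw [mul_comm, ← modByMonic_X_sub_C_eq_C_eval]
  exact eq_sub_of_add_eq' (modByMonic_add_div p _)

section Independence

variable {A : Type*} [CommRing A] {m : ℕ} {B : Fin m → A[X]}

theorem linearIndependent_cons_C_mul_X_sub_C [IsDomain A] {g : A} (hg : g ≠ 0) (r : A)
    (hB : LinearIndependent A B) :
    LinearIndependent A (Fin.cons (C g) fun i => B i * (X - C r) : Fin (m + 1) → A[X]) := by
  have htail : LinearIndependent A fun i => B i * (X - C r) :=
    hB.map' (LinearMap.mulRight A (X - C r))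
      (LinearMap.ker_eq_bot.mpr (mul_left_injective₀ (X_sub_C_ne_zero r)))
  apply LinearIndependent.finCons' (C g) _ htail
  intro c y hy hcy
  have hy_root : y ∈ LinearMap.ker (leval r) :=
    Submodule.span_le.mpr (Set.range_subset_iff.mpr fun i => by simp) hy
  rw [LinearMap.mem_ker, leval_apply] at hy_root
  simpa [smul_eq_C_mul, hy_root, hg] using congrArg (eval r) hcy

theorem span_range_cons_C_mul_X_sub_C (g r : A) :
    Submodule.span A (Set.range (Fin.cons (C g) fun i => B i * (X - C r) : Fin (m + 1) → A[X])) =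
      A ∙ C g ⊔ (Submodule.span A (Set.range B)).map (LinearMap.mulRight A (X - C r)) := by
  rw [Fin.range_cons, Submodule.span_insert, Submodule.map_span, ← Set.range_comp]
  rfl

end Independence

section InterpSet

variable {F : Type*} [Field F] {n : ℕ} {α r' : Fin n → F} {s ℓ : ℕ}

noncomputable def interpSubmodule (α r' : Fin n → F) (s ℓ : ℕ) : Submodule F[X] F[X][X] where
  carrier := InterpSet α r' s ℓ
  zero_mem' :=
    ⟨by simp, fun i => by simpa using hasMultAt_C (b := r' i) (dvd_zero ((X - C (α i)) ^ s))⟩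
  add_mem' hP hQ :=
    ⟨(natDegree_add_le _ _).trans (max_le hP.1 hQ.1), fun i => (hP.2 i).add (hQ.2 i)⟩
  smul_mem' c Q hQ := by
    rw [smul_eq_C_mul]
    refine ⟨natDegree_C_mul_le _ _ |>.trans hQ.1, fun i => ?_⟩
    simpa using (hasMultAt_C (b := r' i) (s := 0) (by simp)).mul (hQ.2 i)

theorem coe_interpSubmodule : (interpSubmodule α r' s ℓ : Set F[X][X]) = InterpSet α r' s ℓ :=
  rfl

theorem C_mem_interpSet {p : F[X]} (h : ∀ i, (X - C (α i)) ^ s ∣ p) :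
    C p ∈ InterpSet α r' s ℓ :=
  ⟨by simp, fun i => hasMultAt_C (h i)⟩

variable {R : F[X]} {Q : F[X][X]}

theorem mul_X_sub_C_mem_interpSet (hR : ∀ i, R.eval (α i) = r' i)
    (hQ : Q ∈ InterpSet α r' s ℓ) : Q * (X - C R) ∈ InterpSet α r' (s + 1) (ℓ + 1) :=
  ⟨natDegree_mul_le.trans (by rw [natDegree_X_sub_C]; exact Nat.add_le_add_right hQ.1 1),
    fun i => (hQ.2 i).mul (hasMultAt_X_sub_C (hR i))⟩

theorem divByMonic_X_sub_C_mem_interpSet (hR : ∀ i, R.eval (α i) = r' i)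
    (hQ : Q ∈ InterpSet α r' (s + 1) (ℓ + 1)) : Q /ₘ (X - C R) ∈ InterpSet α r' s ℓ := by
  refine ⟨?_, fun i => HasMultAt.of_mul_X_sub_C (hR i) ?_⟩
  · rw [natDegree_divByMonic _ (monic_X_sub_C R), natDegree_X_sub_C]
    exact Nat.sub_le_of_le_add hQ.1
  · rw [divByMonic_X_sub_C_mul]
    exact (hQ.2 i).sub (hasMultAt_C ((hQ.2 i).pow_dvd_eval (hR i)))

theorem prod_X_sub_C_pow_dvd_eval (hα : Function.Injective α) (hR : ∀ i, R.eval (α i) = r' i)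
    (hQ : Q ∈ InterpSet α r' s ℓ) : (∏ i, (X - C (α i))) ^ s ∣ Q.eval R := by
  rw [← Finset.prod_pow]
  exact Fintype.prod_dvd_of_coprime (fun i j hij => (pairwise_coprime_X_sub_C hα hij).pow)
    fun i => (hQ.2 i).pow_dvd_eval (hR i)

end InterpSet

theorem statement10_general {F : Type*} [Field F] {n : ℕ}
    (α : Fin n → F) (hα : Function.Injective α) (r' : Fin n → F)
    (s ℓ : ℕ)
    (R : Polynomial F) (hR : ∀ i, R.eval (α i) = r' i)
    (B : Fin (ℓ + 1) → Polynomial (Polynomial F))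
    (hB : IsBasisOfInterp α r' s ℓ B) :
    IsBasisOfInterp α r' (s + 1) (ℓ + 1)
      (Fin.cons (C ((∏ i, (X - C (α i))) ^ (s + 1)))
        (fun i => B i * (X - C R)) :
        Fin (ℓ + 2) → Polynomial (Polynomial F)) := by
  obtain ⟨hB_indep, hB_span⟩ := hB
  have hG : ∏ i, (X - C (α i)) ≠ 0 := (monic_prod_of_monic _ _ fun i _ => monic_X_sub_C _).ne_zero
  refine ⟨linearIndependent_cons_C_mul_X_sub_C (pow_ne_zero _ hG) R hB_indep, ?_⟩
  rw [← coe_interpSubmodule, SetLike.coe_set_eq] at hB_span ⊢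
  refine le_antisymm ?_ fun Q hQ => ?_
  · rw [Submodule.span_le, Fin.range_cons, Set.insert_subset_iff]
    refine ⟨C_mem_interpSet fun i => ?_, Set.range_subset_iff.mpr fun i => ?_⟩
    · exact pow_dvd_pow_of_dvd (Finset.dvd_prod_of_mem _ (Finset.mem_univ i)) _
    · have hBi : B i ∈ interpSubmodule α r' s ℓ := hB_span ▸ Submodule.subset_span ⟨i, rfl⟩
      exact mul_X_sub_C_mem_interpSet hR hBi
  · obtain ⟨c, hc⟩ := prod_X_sub_C_pow_dvd_eval hα hR hQ
    rw [span_range_cons_C_mul_X_sub_C, hB_span, Submodule.mem_sup]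
    refine ⟨C (Q.eval R), Submodule.mem_span_singleton.mpr ⟨c, ?_⟩,
      _, ⟨Q /ₘ (X - C R), divByMonic_X_sub_C_mem_interpSet hR hQ, rfl⟩, ?_⟩
    · rw [hc, smul_eq_C_mul, C_mul, mul_comm]
    · rw [LinearMap.mulRight_apply, divByMonic_X_sub_C_mul, add_sub_cancel]

/-- If B^(0), …, B^(ℓ) is a basis of M_{s,ℓ}, then
G^{s+1}, B^(0)(Y−R), …, B^(ℓ)(Y−R) is a basis of M_{s+1,ℓ+1}. -/
theorem statement10 {F : Type*} [Field F] [Fintype F] {n : ℕ}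
    (α : Fin n → F) (hα : Function.Injective α) (r' : Fin n → F)
    (s ℓ : ℕ) (hs : 1 ≤ s) (hsℓ : s ≤ ℓ)
    (R : Polynomial F) (hRdeg : R.natDegree < n) (hR : ∀ i, R.eval (α i) = r' i)
    (B : Fin (ℓ + 1) → Polynomial (Polynomial F))
    (hB : IsBasisOfInterp α r' s ℓ B) :
    IsBasisOfInterp α r' (s + 1) (ℓ + 1)
      (Fin.cons (C ((∏ i, (X - C (α i))) ^ (s + 1)))
        (fun i => B i * (X - C R)) :
        Fin (ℓ + 2) → Polynomial (Polynomial F)) :=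
  statement10_general α hα r' s ℓ R hR B hB
end
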